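/- Let f, g : [0,∞) → [0,∞) be continuous with f C¹, f(0) = 0, and f'(τ) + g(τ) ≤ a(1+bτ)^{-1} f(τ) + c(1+bτ)^{-1} for positive constants a, b, c. Then (1+bτ)^{-a/b} f(τ) + ∫₀^τ (1+bs)^{-a/b} g(s) ds ≤ (c/a)·(1 - (1+bτ)^{-a/b}) ≤ c/a for all τ ≥ 0. -/

import Mathlib

/-!
With the integrating factor `w τ = (1 + b τ) ^ (-a/b)`, which satisfies `w' = -a (1 + b τ)⁻¹ w`
and `w 0 = 1`, the hypothesis says that `F = f + c/a` obeys `F' + g ≤ a (1 + b τ)⁻¹ F`. Hence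
`(w F)' ≤ -w g`, and integrating over `[0, τ]` gives `w(τ) F(τ) + ∫₀^τ w g ≤ F(0) = c/a`.
-/

open Set MeasureTheory

theorem weight_mul_add_integral_le_of_hasDerivAt {F F' g w k : ℝ → ℝ} {α β : ℝ} (hαβ : α ≤ β)
    (hF : ∀ s ∈ Icc α β, HasDerivAt F (F' s) s)
    (hw : ∀ s ∈ Icc α β, HasDerivAt w (-(k s * w s)) s)
    (hw_nonneg : ∀ s ∈ Ioo α β, 0 ≤ w s)
    (hwg : IntegrableOn (fun s => w s * g s) (Icc α β))
    (hineq : ∀ s ∈ Ioo α β, F' s + g s ≤ k s * F s) :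
    w β * F β + ∫ s in α..β, w s * g s ≤ w α * F α := by
  have hwF : ∀ s ∈ Icc α β,
      HasDerivAt (fun t => w t * F t) (-(k s * w s) * F s + w s * F' s) s :=
    fun s hs => (hw s hs).mul (hF s hs)
  have key := intervalIntegral.sub_le_integral_of_hasDeriv_right_of_le
    (φ := fun s => -(w s * g s)) hαβ
    (fun s hs => (hwF s hs).continuousAt.continuousWithinAt)
    (fun s hs => (hwF s (Ioo_subset_Icc_self hs)).hasDerivWithinAt) hwg.neg
    (fun s hs => by nlinarith [hineq s hs, hw_nonneg s hs])
  rw [intervalIntegral.integral_neg] at key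
  linarith

theorem hasDerivAt_one_add_mul_rpow_neg_div {a b s : ℝ} (hb : b ≠ 0) (hs : 0 < 1 + b * s) :
    HasDerivAt (fun t => (1 + b * t) ^ (-(a / b)))
      (-(a * (1 + b * s)⁻¹ * (1 + b * s) ^ (-(a / b)))) s := by
  have hlin : HasDerivAt (fun t => 1 + b * t) b s := by
    simpa using ((hasDerivAt_id s).const_mul b).const_add 1
  convert hlin.rpow_const (p := -(a / b)) (Or.inl hs.ne') using 1
  rw [Real.rpow_sub hs, Real.rpow_one]
  field_simp

theorem stmt12_general (a b c : ℝ) (ha : 0 < a) (hb : 0 < b) (hc : 0 < c)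
    (f g f' : ℝ → ℝ)
    (hgc : ContinuousOn g (Set.Ici 0))
    (hderiv : ∀ τ, 0 ≤ τ → HasDerivAt f (f' τ) τ)
    (hf0 : f 0 = 0)
    (hineq : ∀ τ, 0 ≤ τ →
      f' τ + g τ ≤ a * (1 + b * τ)⁻¹ * f τ + c * (1 + b * τ)⁻¹) :
    ∀ τ, 0 ≤ τ →
      (1 + b * τ) ^ (-(a / b)) * f τ +
          ∫ s in (0:ℝ)..τ, (1 + b * s) ^ (-(a / b)) * g s ≤
        (c / a) * (1 - (1 + b * τ) ^ (-(a / b))) ∧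
      (c / a) * (1 - (1 + b * τ) ^ (-(a / b))) ≤ c / a := by
  intro τ hτ
  have hbase : ∀ s, 0 ≤ s → 0 < 1 + b * s := fun s hs => by positivity
  have hw_cont : ContinuousOn (fun s => (1 + b * s) ^ (-(a / b))) (Icc 0 τ) :=
    fun s hs => (hasDerivAt_one_add_mul_rpow_neg_div hb.ne' (hbase s hs.1)).continuousAt
      |>.continuousWithinAt
  have key := weight_mul_add_integral_le_of_hasDerivAt (F := fun s => f s + c / a) (g := g)
    (k := fun s => a * (1 + b * s)⁻¹) hτ
    (fun s hs => (hderiv s hs.1).add_const (c / a))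
    (fun s hs => hasDerivAt_one_add_mul_rpow_neg_div hb.ne' (hbase s hs.1))
    (fun s hs => Real.rpow_nonneg (hbase s hs.1.le).le _)
    ((hw_cont.mul (hgc.mono fun s hs => hs.1)).integrableOn_compact isCompact_Icc)
    (fun s hs => by
      rw [mul_add, show a * (1 + b * s)⁻¹ * (c / a) = c * (1 + b * s)⁻¹ by field_simp]
      exact hineq s hs.1.le)
  have hw_nonneg : 0 ≤ (1 + b * τ) ^ (-(a / b)) := Real.rpow_nonneg (hbase τ hτ).le _
  simp only [mul_zero, add_zero, Real.one_rpow, hf0, zero_add, one_mul] at key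
  constructor
  · linarith
  · linarith [mul_nonneg (div_pos hc ha).le hw_nonneg]

theorem stmt12 (a b c : ℝ) (ha : 0 < a) (hb : 0 < b) (hc : 0 < c)
    (f g f' : ℝ → ℝ)
    (hf : ∀ τ, 0 ≤ τ → 0 ≤ f τ) (hg : ∀ τ, 0 ≤ τ → 0 ≤ g τ)
    (hgc : ContinuousOn g (Set.Ici 0))
    (hderiv : ∀ τ, 0 ≤ τ → HasDerivAt f (f' τ) τ)
    (hf'c : ContinuousOn f' (Set.Ici 0))
    (hf0 : f 0 = 0)
    (hineq : ∀ τ, 0 ≤ τ →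
      f' τ + g τ ≤ a * (1 + b * τ)⁻¹ * f τ + c * (1 + b * τ)⁻¹) :
    ∀ τ, 0 ≤ τ →
      (1 + b * τ) ^ (-(a / b)) * f τ +
          ∫ s in (0:ℝ)..τ, (1 + b * s) ^ (-(a / b)) * g s ≤
        (c / a) * (1 - (1 + b * τ) ^ (-(a / b))) ∧
      (c / a) * (1 - (1 + b * τ) ^ (-(a / b))) ≤ c / a :=
  stmt12_general a b c ha hb hc f g f' hgc hderiv hf0 hineq
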